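/- arXiv:2002.08856 — 2 statements merged into one kernel-verified Lean document; each statement's English description precedes it below -/
import Mathlib

section
/- Let (V_t)_{t≥1}, (U_t)_{t≥1} be nonnegative adapted sequences with V_1 ≤ β, V_t ≤ α V_{t-1} + U_{t-1} for t ≥ 2, and E[U_t | F_{t-1}] ≤ β, where α ∈ [0,1) and β ≥ 0. Let τ be a stopping time bounded by a constant n. Then E[∑_{t=1}^{τ} V_t] ≤ (β/(1−α)) · (E[τ] + 1). -/
/-!
Since `V ≥ 0` and `α ≥ 0`, summing the drift inequality up to `τ` and absorbing `α ∑ V` into the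
left side gives, pathwise, `(1 - α) ∑_{t ≤ τ} V t ≤ β + ∑_{t ≤ τ} U t`. The event `{t < τ}` is
`ℱ t`-measurable, so `E[U (t+1); t < τ] = E[E[U (t+1) | ℱ t]; t < τ] ≤ β P(t < τ)`, and summing
over `t < n` gives Wald's bound `E[∑_{t ≤ τ} U t] ≤ β E[τ]`.
-/
open MeasureTheory Finset

theorem one_sub_mul_sum_Icc_le_of_drift {v u : ℕ → ℝ} {α β : ℝ} (hv : ∀ t, 0 ≤ v t)
    (hα : 0 ≤ α) (hv₁ : v 1 ≤ β) (hdrift : ∀ t, 2 ≤ t → v t ≤ α * v (t - 1) + u (t - 1))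
    (T : ℕ) : (1 - α) * ∑ t ∈ Icc 1 T, v t ≤ β + ∑ t ∈ Ico 1 T, u t := by
  obtain rfl | hT := T.eq_zero_or_pos
  · simpa using (hv 1).trans hv₁
  -- carrying `α * v T` along makes the bound inductive
  suffices key : (1 - α) * ∑ t ∈ Icc 1 T, v t + α * v T ≤ β + ∑ t ∈ Ico 1 T, u t by
    nlinarith [mul_nonneg hα (hv T)]
  induction T, hT using Nat.le_induction with
  | base => simp only [Icc_self, sum_singleton, Ico_self, sum_empty]; linarith
  | succ T hT ih =>
    have hstep : v (T + 1) ≤ α * v T + u T := by simpa using hdrift (T + 1) (by omega)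
    rw [sum_Icc_succ_top (by omega), sum_Ico_succ_top hT]
    linarith

theorem sum_Icc_one_eq_sum_range_ite {M : Type*} [AddCommMonoid M] (g : ℕ → M) {k n : ℕ}
    (hk : k ≤ n) : ∑ t ∈ Icc 1 k, g t = ∑ i ∈ range n, if i < k then g (i + 1) else 0 := by
  have hfilter : {i ∈ range n | i < k} = range k := by ext; simp; omega
  rw [← sum_filter, hfilter, ← Ico_add_one_right_eq_Icc, ← Nat.Ico_zero_eq_range,
    sum_Ico_add' g, zero_add]

theorem sum_Icc_one_stopped_eq_sum_indicator {Ω M : Type*} [AddCommMonoid M] {τ : Ω → ℕ} {n : ℕ}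
    (hτ : ∀ ω, τ ω ≤ n) (f : ℕ → Ω → M) (ω : Ω) :
    ∑ t ∈ Icc 1 (τ ω), f t ω = ∑ i ∈ range n, {ω | i < τ ω}.indicator (f (i + 1)) ω := by
  simp only [sum_Icc_one_eq_sum_range_ite (f · ω) (hτ ω), Set.indicator_apply, Set.mem_ofPred_eq]

theorem setIntegral_le_of_condExp_le {Ω : Type*} {m m0 : MeasurableSpace Ω} {μ : Measure Ω}
    [IsFiniteMeasure μ] (hm : m ≤ m0) {f : Ω → ℝ} (hf : Integrable f μ) {c : ℝ}
    (hc : ∀ᵐ ω ∂μ, μ[f|m] ω ≤ c) {s : Set Ω} (hs : MeasurableSet[m] s) :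
    ∫ ω in s, f ω ∂μ ≤ c * μ.real s := by
  rw [← setIntegral_condExp hm hf hs, mul_comm, ← smul_eq_mul, ← setIntegral_const]
  exact setIntegral_mono_ae integrable_condExp.integrableOn (integrable_const c).integrableOn hc

namespace MeasureTheory.IsStoppingTime

variable {Ω : Type*} {m0 : MeasurableSpace Ω} {ℱ : Filtration ℕ m0} {τ : Ω → ℕ}

theorem measurableSet_gt_coe (hτ : IsStoppingTime ℱ (fun ω ↦ (τ ω : WithTop ℕ))) (i : ℕ) :
    MeasurableSet[ℱ i] {ω | i < τ ω} := by
  convert (hτ.measurableSet_le i).compl using 1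
  ext
  simp

variable {μ : Measure Ω} {n : ℕ}

theorem integrable_sum_Icc_one (hτ : IsStoppingTime ℱ (fun ω ↦ (τ ω : WithTop ℕ)))
    (hτn : ∀ ω, τ ω ≤ n) {f : ℕ → Ω → ℝ} (hf : ∀ t, Integrable (f t) μ) :
    Integrable (fun ω ↦ ∑ t ∈ Icc 1 (τ ω), f t ω) μ := by
  simp_rw [sum_Icc_one_stopped_eq_sum_indicator hτn]
  exact integrable_finsetSum _ fun i _ ↦
    (hf (i + 1)).indicator (ℱ.le i _ (hτ.measurableSet_gt_coe i))

theorem integral_natCast_eq_sum_measureReal [IsFiniteMeasure μ]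
    (hτ : IsStoppingTime ℱ (fun ω ↦ (τ ω : WithTop ℕ))) (hτn : ∀ ω, τ ω ≤ n) :
    ∫ ω, (τ ω : ℝ) ∂μ = ∑ i ∈ range n, μ.real {ω | i < τ ω} := by
  have hτ_sum ω : (τ ω : ℝ) = ∑ i ∈ range n, {ω | i < τ ω}.indicator 1 ω := by
    simpa using sum_Icc_one_stopped_eq_sum_indicator hτn (fun _ ↦ (1 : Ω → ℝ)) ω
  simp_rw [hτ_sum]
  rw [integral_finsetSum _ fun i _ ↦
    (integrable_const 1).indicator (ℱ.le i _ (hτ.measurableSet_gt_coe i))]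
  exact sum_congr rfl fun i _ ↦ integral_indicator_one (ℱ.le i _ (hτ.measurableSet_gt_coe i))

theorem integral_sum_Icc_one_le [IsFiniteMeasure μ]
    (hτ : IsStoppingTime ℱ (fun ω ↦ (τ ω : WithTop ℕ))) (hτn : ∀ ω, τ ω ≤ n)
    {f : ℕ → Ω → ℝ} (hf : ∀ t, Integrable (f t) μ) {β : ℝ}
    (hf_cond : ∀ t, ∀ᵐ ω ∂μ, μ[f (t + 1)|ℱ t] ω ≤ β) :
    ∫ ω, ∑ t ∈ Icc 1 (τ ω), f t ω ∂μ ≤ β * ∫ ω, (τ ω : ℝ) ∂μ := by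
  have hA i : MeasurableSet {ω | i < τ ω} := ℱ.le i _ (hτ.measurableSet_gt_coe i)
  simp_rw [sum_Icc_one_stopped_eq_sum_indicator hτn f]
  rw [integral_finsetSum _ fun i _ ↦ (hf (i + 1)).indicator (hA i),
    hτ.integral_natCast_eq_sum_measureReal hτn, mul_sum]
  refine sum_le_sum fun i _ ↦ ?_
  rw [integral_indicator (hA i)]
  exact setIntegral_le_of_condExp_le (ℱ.le i) (hf (i + 1)) (hf_cond i) (hτ.measurableSet_gt_coe i)

end MeasureTheory.IsStoppingTime

theorem drift_condition_stopped_sum_bound_general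
    {Ω : Type*} {m0 : MeasurableSpace Ω} (μ : Measure Ω) [IsProbabilityMeasure μ]
    (ℱ : Filtration ℕ m0)
    (V U : ℕ → Ω → ℝ)
    (hVnonneg : ∀ t ω, 0 ≤ V t ω) (hUnonneg : ∀ t ω, 0 ≤ U t ω)
    (hVint : ∀ t, Integrable (V t) μ) (hUint : ∀ t, Integrable (U t) μ)
    (α β : ℝ) (hα0 : 0 ≤ α) (hα1 : α < 1)
    (hV1 : ∀ᵐ ω ∂μ, V 1 ω ≤ β)
    (hdrift : ∀ t, 2 ≤ t → ∀ᵐ ω ∂μ, V t ω ≤ α * V (t - 1) ω + U (t - 1) ω)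
    (hU : ∀ t, 1 ≤ t → ∀ᵐ ω ∂μ, (μ[U t|ℱ (t - 1)]) ω ≤ β)
    (τ : Ω → ℕ) (hτ : IsStoppingTime ℱ (fun ω => (τ ω : WithTop ℕ)))
    (n : ℕ) (hbdd : ∀ ω, τ ω ≤ n) :
    ∫ ω, (∑ t ∈ Finset.Icc 1 (τ ω), V t ω) ∂μ
      ≤ (β / (1 - α)) * ((∫ ω, (τ ω : ℝ) ∂μ) + 1) := by
  have hdrift_ae : ∀ᵐ ω ∂μ, ∀ t, 2 ≤ t → V t ω ≤ α * V (t - 1) ω + U (t - 1) ω :=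
    ae_all_iff.2 fun t ↦ Filter.eventually_imp_distrib_left.2 (hdrift t)
  have hpath : ∀ᵐ ω ∂μ,
      (1 - α) * ∑ t ∈ Icc 1 (τ ω), V t ω ≤ β + ∑ t ∈ Icc 1 (τ ω), U t ω := by
    filter_upwards [hV1, hdrift_ae] with ω hω₁ hω
    refine (one_sub_mul_sum_Icc_le_of_drift (u := (U · ω)) (hVnonneg · ω) hα0 hω₁ hω _).trans ?_
    exact (add_le_add_iff_left β).2
      (sum_le_sum_of_subset_of_nonneg Ico_subset_Icc_self fun t _ _ ↦ hUnonneg t ω)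
  have hwald : ∫ ω, ∑ t ∈ Icc 1 (τ ω), U t ω ∂μ ≤ β * ∫ ω, (τ ω : ℝ) ∂μ :=
    hτ.integral_sum_Icc_one_le hbdd hUint fun t ↦ by simpa using hU (t + 1) (by omega)
  have hintU := hτ.integrable_sum_Icc_one hbdd hUint
  have key : (1 - α) * ∫ ω, ∑ t ∈ Icc 1 (τ ω), V t ω ∂μ ≤ β * ((∫ ω, (τ ω : ℝ) ∂μ) + 1) := by
    rw [← integral_const_mul]
    calc ∫ ω, (1 - α) * ∑ t ∈ Icc 1 (τ ω), V t ω ∂μ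
        ≤ ∫ ω, β + ∑ t ∈ Icc 1 (τ ω), U t ω ∂μ :=
          integral_mono_ae ((hτ.integrable_sum_Icc_one hbdd hVint).const_mul _)
            ((integrable_const β).add hintU) hpath
      _ = β + ∫ ω, ∑ t ∈ Icc 1 (τ ω), U t ω ∂μ := by
          rw [integral_add (integrable_const β) hintU, integral_const, probReal_univ, one_smul]
      _ ≤ β * ((∫ ω, (τ ω : ℝ) ∂μ) + 1) := by linarith
  rw [div_mul_eq_mul_div, le_div_iff₀ (by linarith)]
  linarith

theorem drift_condition_stopped_sum_bound
    {Ω : Type*} {m0 : MeasurableSpace Ω} (μ : Measure Ω) [IsProbabilityMeasure μ]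
    (ℱ : Filtration ℕ m0)
    (V U : ℕ → Ω → ℝ)
    (hVnonneg : ∀ t ω, 0 ≤ V t ω) (hUnonneg : ∀ t ω, 0 ≤ U t ω)
    (hVmeas : ∀ t, StronglyMeasurable[ℱ t] (V t))
    (hUmeas : ∀ t, StronglyMeasurable[ℱ t] (U t))
    (hVint : ∀ t, Integrable (V t) μ) (hUint : ∀ t, Integrable (U t) μ)
    (α β : ℝ) (hα0 : 0 ≤ α) (hα1 : α < 1) (hβ : 0 ≤ β)
    (hV1 : ∀ᵐ ω ∂μ, V 1 ω ≤ β)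
    (hdrift : ∀ t, 2 ≤ t → ∀ᵐ ω ∂μ, V t ω ≤ α * V (t - 1) ω + U (t - 1) ω)
    (hU : ∀ t, 1 ≤ t → ∀ᵐ ω ∂μ, (μ[U t|ℱ (t - 1)]) ω ≤ β)
    (τ : Ω → ℕ) (hτ : IsStoppingTime ℱ (fun ω => (τ ω : WithTop ℕ)))
    (n : ℕ) (hbdd : ∀ ω, τ ω ≤ n) :
    ∫ ω, (∑ t ∈ Finset.Icc 1 (τ ω), V t ω) ∂μ
      ≤ (β / (1 - α)) * ((∫ ω, (τ ω : ℝ) ∂μ) + 1) :=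
  drift_condition_stopped_sum_bound_general μ ℱ V U hVnonneg hUnonneg hVint hUint α β hα0 hα1 hV1
    hdrift hU τ hτ n hbdd
end

section
/- For SVRG with early stopping: suppose f_T is bounded below by f*, and for each epoch s ≥ 1 there is a constant γ > 0 with ∑_{t=0}^{m-1} E[‖∇f_T(x_t^{s+1})‖² | F_{s-1}] ≤ (f_T(x_m^s) − E[f_T(x_m^{s+1}) | F_{s-1}])/γ. Define τ(ε) = inf{ s ≥ 1 : ‖∇f_T(x_0^{s+1})‖² ≤ ε }, where x_0^{s+1} = x_m^s. Then E[τ(ε)] ≤ 1 + (f_T(x_m^1) − f*)/(γ ε). -/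
open MeasureTheory Finset ENNReal

/-!
Counting epochs: `τ ≤ 1 + #{k ≥ 1 : ‖∇f_T(x_0^{k+1})‖² > ε}`, so by Markov's inequality
`E τ ≤ 1 + ∑_{k ≥ 1} E ‖∇f_T(x_0^{k+1})‖² / ε`. Integrating the descent property (tower property
of conditional expectation) and keeping only its `t = 0` term gives
`E ‖∇f_T(x_0^{k+1})‖² ≤ (E f_T(x_0^{k+1}) - E f_T(x_0^{k+2})) / γ`, which telescopes to
`(f_T(x_m^1) - f*) / γ`.
-/

lemma Finset.sum_range_le_div_of_le_sub_div {G u : ℕ → ℝ} {γ c : ℝ} (hγ : 0 < γ)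
    (hG : ∀ k, G k ≤ (u k - u (k + 1)) / γ) (hc : ∀ k, c ≤ u k) (N : ℕ) :
    ∑ k ∈ range N, G k ≤ (u 0 - c) / γ :=
  calc ∑ k ∈ range N, G k ≤ ∑ k ∈ range N, (u k - u (k + 1)) / γ := sum_le_sum fun k _ => hG k
    _ = (u 0 - u N) / γ := by rw [← sum_div, sum_range_sub']
    _ ≤ (u 0 - c) / γ := by gcongr; exact hc N

lemma ENNReal.tsum_ofReal_le_of_sum_range_le {a : ℕ → ℝ} {B : ℝ} (ha : ∀ k, 0 ≤ a k)
    (hB : ∀ N, ∑ k ∈ range N, a k ≤ B) : ∑' k, ENNReal.ofReal (a k) ≤ ENNReal.ofReal B :=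
  ENNReal.tsum_le_of_sum_range_le fun N => by
    rw [← ENNReal.ofReal_sum_of_nonneg fun k _ => ha k]
    exact ENNReal.ofReal_le_ofReal (hB N)

section Probability

variable {Ω : Type*} {m0 : MeasurableSpace Ω} {μ : Measure Ω}

lemma measure_lt_le_ofReal_integral_div {g : Ω → ℝ} (hg : 0 ≤ᵐ[μ] g) (hgi : Integrable g μ)
    {ε : ℝ} (hε : 0 < ε) : μ {ω | ε < g ω} ≤ ENNReal.ofReal ((∫ ω, g ω ∂μ) / ε) :=
  calc μ {ω | ε < g ω} ≤ μ {ω | ENNReal.ofReal ε ≤ ENNReal.ofReal (g ω)} :=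
        measure_mono fun ω hω => ENNReal.ofReal_le_ofReal (le_of_lt hω)
    _ ≤ (∫⁻ ω, ENNReal.ofReal (g ω) ∂μ) / ENNReal.ofReal ε :=
        meas_ge_le_lintegral_div hgi.aemeasurable.ennreal_ofReal
          (ENNReal.ofReal_pos.mpr hε).ne' ENNReal.ofReal_ne_top
    _ = ENNReal.ofReal ((∫ ω, g ω ∂μ) / ε) := by
        rw [← ofReal_integral_eq_lintegral_ofReal hgi hg, ENNReal.ofReal_div_of_pos hε]

lemma integral_sum_le_of_ae_sum_condExp_le {m : MeasurableSpace Ω} (hm : m ≤ m0)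
    [SigmaFinite (μ.trim hm)] {n : ℕ} {a : ℕ → Ω → ℝ} {b c : Ω → ℝ} {γ : ℝ}
    (hb : Integrable b μ)
    (h : ∀ᵐ ω ∂μ, ∑ t ∈ range n, μ[a t|m] ω ≤ (b ω - μ[c|m] ω) / γ) :
    ∑ t ∈ range n, ∫ ω, a t ω ∂μ ≤ ((∫ ω, b ω ∂μ) - ∫ ω, c ω ∂μ) / γ := by
  have hI := integral_mono_ae (integrable_finsetSum _ fun t _ => integrable_condExp)
    ((hb.sub integrable_condExp).div_const γ) h
  rwa [integral_finsetSum _ fun t _ => integrable_condExp, integral_div,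
    integral_sub' hb integrable_condExp, integral_condExp hm,
    sum_congr rfl fun t _ => integral_condExp hm] at hI

lemma firstHit_le_one_add_tsum_indicator (A : ℕ → Set Ω) (ω : Ω) :
    ((sInf {n : ℕ∞ | ∃ s : ℕ, n = s ∧ 1 ≤ s ∧ ω ∉ A s} : ℕ∞) : ℝ≥0∞)
      ≤ 1 + ∑' k, (A (k + 1)).indicator 1 ω := by
  set τ := sInf {n : ℕ∞ | ∃ s : ℕ, n = s ∧ 1 ≤ s ∧ ω ∉ A s}
  have hτ_le : ∀ s : ℕ, 1 ≤ s → ω ∉ A s → τ ≤ s := fun s hs h => sInf_le ⟨s, rfl, hs, h⟩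
  clear_value τ
  induction τ using ENat.recTopCoe with
  | top =>
    have hmem : ∀ k, ω ∈ A (k + 1) := fun k => by
      by_contra h
      simpa using hτ_le (k + 1) le_add_self h
    simp [Set.indicator_of_mem (hmem _), ENNReal.tsum_const_eq_top_of_ne_zero one_ne_zero]
  | coe n =>
    rcases n with _ | N
    · simp
    have hmem : ∀ k ∈ range N, ω ∈ A (k + 1) := fun k hk => by
      by_contra h
      have := hτ_le (k + 1) le_add_self h
      norm_cast at this
      rw [mem_range] at hk
      omega
    calc (((N + 1 : ℕ) : ℕ∞) : ℝ≥0∞) = 1 + ∑ k ∈ range N, (A (k + 1)).indicator 1 ω := by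
          rw [sum_congr rfl fun k hk => Set.indicator_of_mem (hmem k hk) 1]
          push_cast
          simp [add_comm]
      _ ≤ 1 + ∑' k, (A (k + 1)).indicator 1 ω := by gcongr; exact ENNReal.sum_le_tsum _

lemma lintegral_firstHit_le (A : ℕ → Set Ω) (hA : ∀ s, NullMeasurableSet (A s) μ) :
    ∫⁻ ω, ((sInf {n : ℕ∞ | ∃ s : ℕ, n = s ∧ 1 ≤ s ∧ ω ∉ A s} : ℕ∞) : ℝ≥0∞) ∂μ
      ≤ μ Set.univ + ∑' k, μ (A (k + 1)) :=
  calc _ ≤ ∫⁻ ω, (1 + ∑' k, (A (k + 1)).indicator 1 ω) ∂μ :=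
        lintegral_mono fun ω => firstHit_le_one_add_tsum_indicator A ω
    _ = μ Set.univ + ∑' k, μ (A (k + 1)) := by
        rw [lintegral_add_left measurable_const,
          lintegral_tsum (f := fun k => (A (k + 1)).indicator 1)
            fun k => aemeasurable_one.indicator₀ (hA _)]
        simp [lintegral_indicator_one₀ (hA _)]

end Probability

theorem svrg_early_stopping_expected_epochs_general
    {Ω : Type*} {m0 : MeasurableSpace Ω} (μ : Measure Ω) [IsProbabilityMeasure μ]
    (ℱ : Filtration ℕ m0)
    {d : ℕ} (fT : EuclideanSpace ℝ (Fin d) → ℝ)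
    (fT' : EuclideanSpace ℝ (Fin d) → EuclideanSpace ℝ (Fin d))
    (fstar : ℝ) (hlb : ∀ x, fstar ≤ fT x)
    (m : ℕ) (hm : 1 ≤ m)
    (γ : ℝ) (hγ : 0 < γ) (ε : ℝ) (hε : 0 < ε)
    -- `X s t` is the iterate `x_t^{s+1}` of epoch `s`, for `s ≥ 1`, `0 ≤ t ≤ m`.
    (X : ℕ → ℕ → Ω → EuclideanSpace ℝ (Fin d))
    -- each epoch starts where the previous ended: `x_0^{s+2} = x_m^{s+1}`
    (hlink : ∀ s, 1 ≤ s → X (s + 1) 0 = X s m)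
    -- the initial point `x_m^1 = x_0^2` is deterministic
    (x₁ : EuclideanSpace ℝ (Fin d)) (hinit : X 1 0 = fun _ => x₁)
    -- adaptedness and integrability
    (hint1 : ∀ s t, Integrable (fun ω => ‖fT' (X s t ω)‖ ^ 2) μ)
    (hint2 : ∀ s t, Integrable (fun ω => fT (X s t ω)) μ)
    -- the per-epoch expected descent property
    (hdescent : ∀ s, 1 ≤ s → ∀ᵐ ω ∂μ,
      ∑ t ∈ Finset.range m, (μ[fun ω' => ‖fT' (X s t ω')‖ ^ 2|ℱ (s - 1)]) ω
        ≤ (fT (X s 0 ω) - (μ[fun ω' => fT (X s m ω')|ℱ (s - 1)]) ω) / γ)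
    -- the stopping time: the first epoch `s ≥ 1` with `‖∇f_T(x_0^{s+1})‖² ≤ ε`
    (τ : Ω → ℕ∞)
    (hτ : ∀ ω, τ ω = sInf {n : ℕ∞ | ∃ s : ℕ, n = s ∧ 1 ≤ s ∧ ‖fT' (X s 0 ω)‖ ^ 2 ≤ ε}) :
    ∫⁻ ω, (τ ω : ℝ≥0∞) ∂μ ≤ ENNReal.ofReal (1 + (fT x₁ - fstar) / (γ * ε)) := by
  set G : ℕ → ℝ := fun s => ∫ ω, ‖fT' (X s 0 ω)‖ ^ 2 ∂μ
  set F : ℕ → ℝ := fun s => ∫ ω, fT (X s 0 ω) ∂μ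
  have hepoch : ∀ k, G (k + 1) ≤ (F (k + 1) - F (k + 2)) / γ := fun k => by
    have h := integral_sum_le_of_ae_sum_condExp_le (ℱ.le k) (hint2 (k + 1) 0)
      (hdescent (k + 1) le_add_self)
    rw [show F (k + 2) = ∫ ω, fT (X (k + 1) m ω) ∂μ by simp only [F, hlink (k + 1) le_add_self]]
    exact (single_le_sum (fun t _ => integral_nonneg fun ω => by positivity)
      (mem_range.mpr hm)).trans h
  have hF : ∀ k, fstar ≤ F (k + 1) := fun k => by
    simpa using integral_mono (integrable_const fstar) (hint2 (k + 1) 0) fun ω => hlb _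
  have hsum : ∀ N, ∑ k ∈ range N, G (k + 1) ≤ (fT x₁ - fstar) / γ := by
    simpa [F, hinit] using sum_range_le_div_of_le_sub_div hγ hepoch hF
  set A : ℕ → Set Ω := fun s => {ω | ε < ‖fT' (X s 0 ω)‖ ^ 2}
  have hA : ∀ s, NullMeasurableSet (A s) μ := fun s =>
    (hint1 s 0).aemeasurable.nullMeasurable measurableSet_Ioi
  calc ∫⁻ ω, (τ ω : ℝ≥0∞) ∂μ
      = ∫⁻ ω, ((sInf {n : ℕ∞ | ∃ s : ℕ, n = s ∧ 1 ≤ s ∧ ω ∉ A s} : ℕ∞) : ℝ≥0∞) ∂μ := by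
        simp [hτ, A]
    _ ≤ 1 + ∑' k, μ (A (k + 1)) := by simpa using lintegral_firstHit_le A hA
    _ ≤ 1 + ∑' k, ENNReal.ofReal (G (k + 1) / ε) := by
        gcongr with k
        exact measure_lt_le_ofReal_integral_div (.of_forall fun ω => by positivity)
          (hint1 _ 0) hε
    _ ≤ 1 + ENNReal.ofReal ((fT x₁ - fstar) / γ / ε) := by
        gcongr
        exact ENNReal.tsum_ofReal_le_of_sum_range_le
          (fun k => div_nonneg (integral_nonneg fun ω => by positivity) hε.le)
          fun N => by rw [← sum_div]; gcongr; exact hsum N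
    _ = ENNReal.ofReal (1 + (fT x₁ - fstar) / (γ * ε)) := by
        rw [div_div, ENNReal.ofReal_add zero_le_one
          (div_nonneg (sub_nonneg.2 (hlb x₁)) (by positivity)), ENNReal.ofReal_one]

theorem svrg_early_stopping_expected_epochs
    {Ω : Type*} {m0 : MeasurableSpace Ω} (μ : Measure Ω) [IsProbabilityMeasure μ]
    (ℱ : Filtration ℕ m0)
    {d : ℕ} (fT : EuclideanSpace ℝ (Fin d) → ℝ)
    (fT' : EuclideanSpace ℝ (Fin d) → EuclideanSpace ℝ (Fin d))
    (hgrad : ∀ x, HasGradientAt fT (fT' x) x)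
    (fstar : ℝ) (hlb : ∀ x, fstar ≤ fT x)
    (m : ℕ) (hm : 1 ≤ m)
    (γ : ℝ) (hγ : 0 < γ) (ε : ℝ) (hε : 0 < ε)
    -- `X s t` is the iterate `x_t^{s+1}` of epoch `s`, for `s ≥ 1`, `0 ≤ t ≤ m`.
    (X : ℕ → ℕ → Ω → EuclideanSpace ℝ (Fin d))
    -- each epoch starts where the previous ended: `x_0^{s+2} = x_m^{s+1}`
    (hlink : ∀ s, 1 ≤ s → X (s + 1) 0 = X s m)
    -- the initial point `x_m^1 = x_0^2` is deterministic
    (x₁ : EuclideanSpace ℝ (Fin d)) (hinit : X 1 0 = fun _ => x₁)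
    -- adaptedness and integrability
    (hmeas : ∀ s t, 1 ≤ s → t ≤ m → StronglyMeasurable[ℱ s] (X s t))
    (hint1 : ∀ s t, Integrable (fun ω => ‖fT' (X s t ω)‖ ^ 2) μ)
    (hint2 : ∀ s t, Integrable (fun ω => fT (X s t ω)) μ)
    -- the per-epoch expected descent property
    (hdescent : ∀ s, 1 ≤ s → ∀ᵐ ω ∂μ,
      ∑ t ∈ Finset.range m, (μ[fun ω' => ‖fT' (X s t ω')‖ ^ 2|ℱ (s - 1)]) ω
        ≤ (fT (X s 0 ω) - (μ[fun ω' => fT (X s m ω')|ℱ (s - 1)]) ω) / γ)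
    -- the stopping time: the first epoch `s ≥ 1` with `‖∇f_T(x_0^{s+1})‖² ≤ ε`
    (τ : Ω → ℕ∞)
    (hτ : ∀ ω, τ ω = sInf {n : ℕ∞ | ∃ s : ℕ, n = s ∧ 1 ≤ s ∧ ‖fT' (X s 0 ω)‖ ^ 2 ≤ ε}) :
    ∫⁻ ω, (τ ω : ℝ≥0∞) ∂μ ≤ ENNReal.ofReal (1 + (fT x₁ - fstar) / (γ * ε)) :=
  svrg_early_stopping_expected_epochs_general μ ℱ fT fT' fstar hlb m hm γ hγ ε hε X hlink x₁ hinit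
    hint1 hint2 hdescent τ hτ
end
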